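/- (Theorem 3, adaptive Lyapunov identity.) Let J be a symmetric positive-definite 3×3 real matrix, K = (k₁,k₂,k₃) with kᵢ > 0, p ∈ ℕ, a ∈ ℝᵖ a constant unknown parameter vector, and ψ : ℝᵖ → ℝ twice continuously differentiable. Let Y : ℝ → Matrix (Fin p) (Fin 3) ℝ be continuous, let â : ℝ → ℝᵖ and s : ℝ → ℝ³ be differentiable, and suppose for all t: (i) the closed-loop error dynamics J s'(t) = −Y(t)ᵀ (a − â(t)) − K∘s(t) hold, and (ii) the adaptation law ∇²ψ(â(t)) · â'(t) = −Y(t) · s(t) holds. Then the Lyapunov function V(t) = s(t)ᵀ J s(t) + 2·d_ψ(a ‖ â(t)) is differentiable with V'(t) = −2 Σᵢ kᵢ sᵢ(t)² ≤ 0 for all t. -/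

import Mathlib

noncomputable section

open Matrix
open scoped RealInnerProductSpace

/-- Componentwise product `K∘v = (k₁v₁, k₂v₂, k₃v₃)`. -/
def compMul (K v : Fin 3 → ℝ) : Fin 3 → ℝ := fun i => K i * v i

/-- Reinterpret a plain vector as an element of Euclidean space. -/
def toE (p : ℕ) (v : Fin p → ℝ) : EuclideanSpace ℝ (Fin p) := WithLp.toLp 2 v

/-!
Write `V = sᵀ J s + 2 d_ψ(a ‖ â)`. Since `J` is symmetric, the quadratic term has derivative
`2 sᵀ J s'`, which the closed loop turns into `-2 ⟪s, Yᵀ (a - â)⟫ - 2 ∑ kᵢ sᵢ²`. Differentiating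
the Bregman divergence in its second argument leaves only `-⟪a - â, ∇²ψ(â) â'⟫`, which the
adaptation law turns into `⟪a - â, Y s⟫`. The two cross terms cancel, leaving the dissipation.
-/

theorem Matrix.IsSymm.dotProduct_mulVec_comm {n R : Type*} [Fintype n] [CommSemiring R]
    {J : Matrix n n R} (hJ : J.IsSymm) (u v : n → R) : u ⬝ᵥ J *ᵥ v = v ⬝ᵥ J *ᵥ u := by
  conv_lhs => rw [← hJ.eq]
  exact dotProduct_transpose_mulVec J u v

section Derivatives

variable {𝕜 : Type*} [NontriviallyNormedField 𝕜] {m n : Type*} [Fintype n] {t : 𝕜}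

theorem HasDerivAt.dotProduct {u v : 𝕜 → n → 𝕜} {u' v' : n → 𝕜}
    (hu : HasDerivAt u u' t) (hv : HasDerivAt v v' t) :
    HasDerivAt (fun τ => u τ ⬝ᵥ v τ) (u' ⬝ᵥ v t + u t ⬝ᵥ v') t := by
  rw [_root_.dotProduct, _root_.dotProduct, ← Finset.sum_add_distrib]
  exact HasDerivAt.fun_sum fun i _ => (hasDerivAt_pi.1 hu i).fun_mul (hasDerivAt_pi.1 hv i)

theorem HasDerivAt.mulVec (J : Matrix m n 𝕜) {v : 𝕜 → n → 𝕜} {v' : n → 𝕜}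
    (hv : HasDerivAt v v' t) : HasDerivAt (fun τ => J *ᵥ v τ) (J *ᵥ v') t :=
  hasDerivAt_pi.2 fun i => by
    refine ((hasDerivAt_const t (J i)).dotProduct hv).congr_deriv ?_
    rw [zero_dotProduct, zero_add, Matrix.mulVec]

theorem HasDerivAt.dotProduct_mulVec_self {J : Matrix n n 𝕜} (hJ : J.IsSymm) {s : 𝕜 → n → 𝕜}
    {s' : n → 𝕜} (hs : HasDerivAt s s' t) :
    HasDerivAt (fun τ => s τ ⬝ᵥ J *ᵥ s τ) (2 * (s t ⬝ᵥ J *ᵥ s')) t := by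
  refine (hs.dotProduct (hs.mulVec J)).congr_deriv ?_
  rw [hJ.dotProduct_mulVec_comm s', two_mul]

end Derivatives

section Bregman

variable {E : Type*} [NormedAddCommGroup E] [InnerProductSpace ℝ E] [CompleteSpace E]

def bregmanDiv (ψ : E → ℝ) (y x : E) : ℝ := ψ y - ψ x - ⟪y - x, gradient ψ x⟫

theorem ContDiff.differentiable_gradient {ψ : E → ℝ} (hψ : ContDiff ℝ 2 ψ) :
    Differentiable ℝ (gradient ψ) :=
  (InnerProductSpace.toDual ℝ E).symm.toContinuousLinearEquiv.differentiable.comp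
    ((hψ.fderiv_right one_add_one_eq_two.le).differentiable one_ne_zero)

/-- The first-order terms `⟪∇ψ(x), x'⟫` coming from `ψ ∘ x` and from the linearization cancel,
so only the Hessian term survives. -/
theorem HasDerivAt.bregmanDiv_right {ψ : E → ℝ} (y : E) {x : ℝ → E} {x' : E} {t : ℝ}
    (hx : HasDerivAt x x' t) (hψ : DifferentiableAt ℝ ψ (x t))
    (hgrad : DifferentiableAt ℝ (gradient ψ) (x t)) :
    HasDerivAt (fun τ => bregmanDiv ψ y (x τ))
      (-⟪y - x t, fderiv ℝ (gradient ψ) (x t) x'⟫) t := by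
  have hψx : HasDerivAt (fun τ => ψ (x τ)) ⟪gradient ψ (x t), x'⟫ t := by
    rw [inner_gradient_left]
    exact hψ.hasFDerivAt.comp_hasDerivAt t hx
  have hlin := (hx.const_sub y).inner ℝ (hgrad.hasFDerivAt.comp_hasDerivAt t hx)
  refine (((hasDerivAt_const t (ψ y)).sub hψx).sub hlin).congr_deriv ?_
  rw [inner_neg_left, Function.comp_apply, real_inner_comm x']
  ring

end Bregman

theorem inner_toE {p : ℕ} (w : EuclideanSpace ℝ (Fin p)) (v : Fin p → ℝ) :
    ⟪w, toE p v⟫ = w ⬝ᵥ v :=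
  dotProduct_comm _ _

theorem dotProduct_compMul_self (K v : Fin 3 → ℝ) : v ⬝ᵥ compMul K v = ∑ i, K i * v i ^ 2 :=
  Finset.sum_congr rfl fun i _ => by simp only [compMul]; ring

theorem adaptive_control_lyapunov_identity_general
    (J : Matrix (Fin 3) (Fin 3) ℝ) (hJsymm : J.IsSymm)
    (K : Fin 3 → ℝ) (hK : ∀ i, 0 < K i)
    (p : ℕ) (a : EuclideanSpace ℝ (Fin p))
    (ψ : EuclideanSpace ℝ (Fin p) → ℝ) (hψ : ContDiff ℝ 2 ψ)
    (Y : ℝ → Matrix (Fin p) (Fin 3) ℝ)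
    (ahat : ℝ → EuclideanSpace ℝ (Fin p)) (hahat : Differentiable ℝ ahat)
    (s : ℝ → Fin 3 → ℝ) (hsdiff : Differentiable ℝ s)
    (hloop : ∀ t : ℝ,
      J *ᵥ deriv s t = -((Y t)ᵀ *ᵥ (a - ahat t)) - compMul K (s t))
    (hadapt : ∀ t : ℝ,
      (fderiv ℝ (gradient ψ) (ahat t)) (deriv ahat t) = -toE p (Y t *ᵥ s t)) :
    ∀ t : ℝ,
      HasDerivAt
        (fun τ => s τ ⬝ᵥ (J *ᵥ s τ) +
          2 * (ψ a - ψ (ahat τ) - ⟪a - ahat τ, gradient ψ (ahat τ)⟫))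
        (-2 * ∑ i, K i * (s t i) ^ 2) t ∧
      -2 * ∑ i, K i * (s t i) ^ 2 ≤ 0 := by
  intro t
  have hV := ((hsdiff t).hasDerivAt.dotProduct_mulVec_self hJsymm).add
    (((hahat t).hasDerivAt.bregmanDiv_right a (hψ.differentiable two_ne_zero _)
      (hψ.differentiable_gradient _)).const_mul 2)
  have hdissipation : 0 ≤ ∑ i, K i * s t i ^ 2 :=
    Finset.sum_nonneg fun i _ => mul_nonneg (hK i).le (sq_nonneg _)
  refine ⟨hV.congr_deriv ?_, by linarith⟩
  rw [hloop, hadapt, dotProduct_sub, dotProduct_neg, dotProduct_transpose_mulVec,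
    dotProduct_compMul_self, inner_neg_right, inner_toE, WithLp.ofLp_sub]
  ring

theorem adaptive_control_lyapunov_identity
    (J : Matrix (Fin 3) (Fin 3) ℝ) (hJsymm : J.IsSymm) (hJpos : J.PosDef)
    (K : Fin 3 → ℝ) (hK : ∀ i, 0 < K i)
    (p : ℕ) (a : EuclideanSpace ℝ (Fin p))
    (ψ : EuclideanSpace ℝ (Fin p) → ℝ) (hψ : ContDiff ℝ 2 ψ)
    (Y : ℝ → Matrix (Fin p) (Fin 3) ℝ) (hY : ∀ i j, Continuous fun t => Y t i j)
    (ahat : ℝ → EuclideanSpace ℝ (Fin p)) (hahat : Differentiable ℝ ahat)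
    (s : ℝ → Fin 3 → ℝ) (hsdiff : Differentiable ℝ s)
    (hloop : ∀ t : ℝ,
      J *ᵥ deriv s t = -((Y t)ᵀ *ᵥ (a - ahat t)) - compMul K (s t))
    (hadapt : ∀ t : ℝ,
      (fderiv ℝ (gradient ψ) (ahat t)) (deriv ahat t) = -toE p (Y t *ᵥ s t)) :
    ∀ t : ℝ,
      HasDerivAt
        (fun τ => s τ ⬝ᵥ (J *ᵥ s τ) +
          2 * (ψ a - ψ (ahat τ) - ⟪a - ahat τ, gradient ψ (ahat τ)⟫))
        (-2 * ∑ i, K i * (s t i) ^ 2) t ∧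
      -2 * ∑ i, K i * (s t i) ^ 2 ≤ 0 :=
  adaptive_control_lyapunov_identity_general J hJsymm K hK p a ψ hψ Y ahat hahat s hsdiff hloop
    hadapt
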